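/- For every n ≥ 1 and every natural number x with 0 ≤ x < 2^n, one has Λ_{n+1}(2^n + x) = x·2^(C(n,2)) + Λ_n(x); that is, prepending a 1 bit to an n-bit string x yields a concurrence vector whose encoding equals x concatenated with λ(x): λ(1⋮x) = x ⋮ λ(x). -/

import Mathlib

/-! In the enumeration of the pairs of `n + 1` bits, the `n` pairs `(1, j)` come first and the
pairs `(i + 1, j + 1)` of the remaining `n` bits follow in their own order, occupying the low
`C(n, 2)` positions. The first block compares the leading bit with each other bit, so when the
leading bit is `1` it is the binary representation of the remaining bits, `x` itself. -/

/-- `concEnc n x` is `Λ_n(x)`: the natural number whose `C(n,2)`-bit binary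
representation is the concurrence vector `λ(x_[n])` of the `n`-bit binary
representation `(b_1, …, b_n)` of `x` (with `b_1` most significant).
The bit for the pair `(i,j)`, `1 ≤ i < j ≤ n`, equals `1` iff `b_i = b_j`;
pairs are ordered `(1,2),(1,3),…,(1,n),(2,3),…,(n-1,n)` with `(1,2)` the most
significant bit. -/
def concEnc (n x : ℕ) : ℕ :=
  ∑ i ∈ Finset.Icc 1 n, ∑ j ∈ Finset.Icc (i + 1) n,
    if x.testBit (n - i) = x.testBit (n - j)
    then 2 ^ (n.choose 2 - 1 - ((i - 1) * (2 * n - i) / 2 + (j - i - 1)))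
    else 0

open Finset

theorem Nat.sum_range_ite_testBit {n x : ℕ} (hx : x < 2 ^ n) :
    ∑ k ∈ range n, (if x.testBit k then 2 ^ k else 0) = x := by
  induction n generalizing x with
  | zero => simp_all
  | succ n ih =>
    have hbit : ∀ k, (if x.testBit (k + 1) then 2 ^ (k + 1) else 0)
        = 2 * (if (x / 2).testBit k then 2 ^ k else 0) := by
      intro k
      rw [Nat.testBit_add_one]
      split <;> ring
    have hhalf : x / 2 < 2 ^ n := by rw [pow_succ] at hx; omega
    rw [sum_range_succ', sum_congr rfl fun k _ => hbit k, ← mul_sum, ih hhalf, Nat.testBit_zero]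
    split_ifs with hodd <;> simp only [decide_eq_true_eq] at hodd <;> omega

theorem Nat.testBit_mod_two_pow_of_lt {x n k : ℕ} (hk : k < n) :
    (x % 2 ^ n).testBit k = x.testBit k := by
  simp [Nat.testBit_mod_two_pow, hk]

theorem Nat.succ_choose_two (n : ℕ) : (n + 1).choose 2 = n.choose 2 + n := by
  rw [Nat.choose_succ_succ', Nat.choose_one_right, add_comm]

/-- `(i - 1) * (2 * n - i) / 2` counts the pairs `(i', j)` with `i' < i` among `n` bits, so this
says that row `i + 1` for `n + 1` bits starts `n` positions after row `i` for `n` bits. -/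
theorem triangle_offset_succ {n i : ℕ} (hi : 1 ≤ i) (hin : i ≤ 2 * n) :
    i * (2 * (n + 1) - (i + 1)) / 2 = (i - 1) * (2 * n - i) / 2 + n := by
  obtain ⟨a, rfl⟩ : ∃ a, i = a + 1 := ⟨i - 1, by omega⟩
  obtain ⟨m, hm⟩ : ∃ m, 2 * n = a + 1 + m := ⟨2 * n - (a + 1), by omega⟩
  have hprod : (a + 1) * (2 * (n + 1) - (a + 1 + 1)) = a * (2 * n - (a + 1)) + 2 * n := by
    rw [show 2 * (n + 1) - (a + 1 + 1) = m + 1 by omega, show 2 * n - (a + 1) = m by omega]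
    linarith
  rw [hprod, Nat.add_mul_div_left _ _ two_pos, Nat.add_sub_cancel]

def concTerm (n x i j : ℕ) : ℕ :=
  if x.testBit (n - i) = x.testBit (n - j)
  then 2 ^ (n.choose 2 - 1 - ((i - 1) * (2 * n - i) / 2 + (j - i - 1)))
  else 0

theorem concEnc_eq_sum_concTerm (n x : ℕ) :
    concEnc n x = ∑ i ∈ Icc 1 n, ∑ j ∈ Icc (i + 1) n, concTerm n x i j :=
  rfl

theorem concTerm_succ_one {n y j : ℕ} (hj : j ∈ Icc 2 (n + 1)) :
    concTerm (n + 1) y 1 j =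
      (if y.testBit n = y.testBit (n + 1 - j) then 2 ^ (n + 1 - j) else 0) * 2 ^ n.choose 2 := by
  rw [mem_Icc] at hj
  have hexp : (n + 1).choose 2 - 1 - ((1 - 1) * (2 * (n + 1) - 1) / 2 + (j - 1 - 1))
      = n + 1 - j + n.choose 2 := by
    rw [Nat.succ_choose_two]
    simp only [Nat.sub_self, zero_mul, Nat.zero_div, zero_add]
    omega
  rw [concTerm, Nat.add_sub_cancel, hexp, pow_add, ite_mul, zero_mul]

theorem concTerm_succ_succ {n y i j : ℕ} (hi : 1 ≤ i) (hij : i < j) (hjn : j ≤ n) :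
    concTerm (n + 1) y (i + 1) (j + 1) = concTerm n (y % 2 ^ n) i j := by
  have hexp : (n + 1).choose 2 - 1 - ((i + 1 - 1) * (2 * (n + 1) - (i + 1)) / 2
      + (j + 1 - (i + 1) - 1)) = n.choose 2 - 1 - ((i - 1) * (2 * n - i) / 2 + (j - i - 1)) := by
    rw [Nat.add_sub_cancel, triangle_offset_succ hi (by omega), Nat.succ_choose_two]
    omega
  rw [concTerm, concTerm, hexp, Nat.add_sub_add_right, Nat.add_sub_add_right,
    Nat.testBit_mod_two_pow_of_lt (by omega), Nat.testBit_mod_two_pow_of_lt (by omega)]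

theorem concEnc_succ (n y : ℕ) :
    concEnc (n + 1) y = (∑ k ∈ range n, if y.testBit n = y.testBit k then 2 ^ k else 0)
      * 2 ^ n.choose 2 + concEnc n (y % 2 ^ n) := by
  have hfirst : ∑ j ∈ Icc (1 + 1) (n + 1), concTerm (n + 1) y 1 j
      = (∑ k ∈ range n, if y.testBit n = y.testBit k then 2 ^ k else 0) * 2 ^ n.choose 2 := by
    rw [sum_congr rfl fun j hj => concTerm_succ_one hj, ← sum_mul, ← sum_range_reflect,
      ← Ico_add_one_right_eq_Icc, sum_Ico_eq_sum_range]
    refine congrArg (· * _) (sum_congr (by simp) fun k hk => ?_)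
    rw [mem_range] at hk
    rw [show n + 1 - (2 + k) = n - 1 - k by omega]
  have hrest : ∑ i ∈ Icc (1 + 1) (n + 1), ∑ j ∈ Icc (i + 1) (n + 1), concTerm (n + 1) y i j
      = concEnc n (y % 2 ^ n) := by
    rw [concEnc_eq_sum_concTerm, ← map_add_right_Icc 1 n 1, sum_map]
    refine sum_congr rfl fun i hi => ?_
    rw [mem_Icc] at hi
    rw [addRightEmbedding_apply, ← map_add_right_Icc (i + 1) n 1, sum_map]
    exact sum_congr rfl fun j hj => by
      rw [mem_Icc] at hj
      exact concTerm_succ_succ hi.1 (by omega) hj.2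
  rw [concEnc_eq_sum_concTerm, ← insert_Icc_add_one_left_eq_Icc (by omega), sum_insert (by simp),
    hfirst, hrest]

theorem stmt_6_general (n x : ℕ) (hx : x < 2 ^ n) :
    concEnc (n + 1) (2 ^ n + x) = x * 2 ^ n.choose 2 + concEnc n x := by
  have hlow : ∀ k ∈ range n, (2 ^ n + x).testBit k = x.testBit k := fun k hk =>
    Nat.testBit_two_pow_add_gt (mem_range.1 hk) x
  have htop : (2 ^ n + x).testBit n = true := by
    rw [Nat.testBit_two_pow_add_eq, Nat.testBit_lt_two_pow hx, Bool.not_false]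
  have hfirst : (∑ k ∈ range n,
      if (2 ^ n + x).testBit n = (2 ^ n + x).testBit k then 2 ^ k else 0) = x :=
    (sum_congr rfl fun k hk => by simp only [htop, hlow k hk, Bool.true_eq]).trans
      (Nat.sum_range_ite_testBit hx)
  rw [concEnc_succ, hfirst, Nat.add_mod_left, Nat.mod_eq_of_lt hx]

/-- Prepending a `1` bit: for `n ≥ 1` and `x < 2^n`,
`Λ_{n+1}(2^n + x) = x·2^C(n,2) + Λ_n(x)`, i.e. `λ(1⋮x) = x ⋮ λ(x)`. -/
theorem stmt_6 (n x : ℕ) (hn : 1 ≤ n) (hx : x < 2 ^ n) :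
    concEnc (n + 1) (2 ^ n + x) = x * 2 ^ n.choose 2 + concEnc n x :=
  stmt_6_general n x hx
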